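/- Let ν ≥ 0 and let f(x) = x^{-1/2} e^{-x/2} / (√2 · Γ(1/2)) for x > 0 be the density of the chi-squared distribution with one degree of freedom, and let m₁ = ∫_0^∞ max(x − ν, 0) · f(x) dx. Then the second moment of the soft-thresholded variable satisfies ∫_0^∞ (max(x − ν, 0))² · f(x) dx = (1/Γ(1/2)) · ( 3 · ∫_{ν/2}^∞ t^{-1/2} e^{-t} dt + e^{-ν/2} · √(2ν) · (3 + ν) ) − 2ν · m₁ − ν² · ∫_ν^∞ f(x) dx. -/

import Mathlib

/-!
On `{x > ν}` we have `(x - ν)² = x² - 2ν(x - ν) - ν²`, which splits `E[(X - ν)₊²]` into the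
truncated second moment `E[X²; X > ν]`, the first moment `m₁` and the tail `ℙ(X > ν)`. The
substitution `x = 2t` turns `E[X²; X > ν]` into `(4 / Γ(1/2)) Γ(5/2, ν/2)`, and two integrations
by parts, `Γ(s + 1, a) = a^s e^{-a} + s Γ(s, a)`, reduce this to `Γ(1/2, ν/2)`.
-/

open MeasureTheory Real Set

/-- The upper incomplete gamma function `Γ(s, a)`. -/
noncomputable def upperGamma (s a : ℝ) : ℝ := ∫ t in Ioi a, t ^ (s - 1) * exp (-t)

theorem integrableOn_rpow_mul_exp_neg_div {s b a : ℝ} (hs : -1 < s) (hb : 0 < b) (ha : 0 ≤ a) :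
    IntegrableOn (fun x : ℝ => x ^ s * exp (-x / b)) (Ioi a) := by
  refine ((integrableOn_rpow_mul_exp_neg_mul_rpow hs one_pos (inv_pos.2 hb)).congr_fun
    (fun x _ => ?_) measurableSet_Ioi).mono_set (Ioi_subset_Ioi ha)
  rw [rpow_one, neg_mul, inv_mul_eq_div, neg_div]

theorem integrableOn_rpow_mul_exp_neg {s a : ℝ} (hs : -1 < s) (ha : 0 ≤ a) :
    IntegrableOn (fun x : ℝ => x ^ s * exp (-x)) (Ioi a) := by
  simpa using integrableOn_rpow_mul_exp_neg_div hs one_pos ha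

theorem upperGamma_add_one {s a : ℝ} (hs : 0 < s) (ha : 0 ≤ a) :
    upperGamma (s + 1) a = a ^ s * exp (-a) + s * upperGamma s a := by
  have hderiv : ∀ t ∈ Ioi a, HasDerivAt (fun t : ℝ => t ^ s * exp (-t))
      (s * (t ^ (s - 1) * exp (-t)) - t ^ s * exp (-t)) t := by
    intro t ht
    have h₁ := hasDerivAt_rpow_const (p := s) (Or.inl (ha.trans_lt ht).ne')
    exact (h₁.mul (hasDerivAt_neg t).exp).congr_deriv (by ring)
  have hcont : ContinuousWithinAt (fun t : ℝ => t ^ s * exp (-t)) (Ici a) a :=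
    ((continuousAt_rpow_const a s (Or.inr hs.le)).mul
      (continuous_exp.comp continuous_neg).continuousAt).continuousWithinAt
  have hlim : Filter.Tendsto (fun t : ℝ => t ^ s * exp (-t)) Filter.atTop (nhds 0) := by
    simpa using tendsto_rpow_mul_exp_neg_mul_atTop_nhds_zero s 1 one_pos
  have hint₀ := integrableOn_rpow_mul_exp_neg (s := s - 1) (by linarith) ha
  have hint₁ := integrableOn_rpow_mul_exp_neg (s := s) (by linarith) ha
  have hftc := integral_Ioi_of_hasDerivAt_of_tendsto hcont hderiv
    ((hint₀.const_mul s).sub hint₁) hlim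
  rw [integral_sub (hint₀.const_mul s) hint₁, integral_const_mul] at hftc
  rw [upperGamma, upperGamma, add_sub_cancel_right]
  linarith

theorem integral_rpow_mul_exp_neg_div_Ioi {s b a : ℝ} (hb : 0 < b) (ha : 0 ≤ a) :
    ∫ x in Ioi a, x ^ (s - 1) * exp (-x / b) = b ^ s * upperGamma s (a / b) := by
  have hscale : ∀ x ∈ Ioi a, x ^ (s - 1) * exp (-x / b)
      = b ^ (s - 1) * ((b⁻¹ * x) ^ (s - 1) * exp (-(b⁻¹ * x))) := by
    intro x hx
    have hb' := (rpow_pos_of_pos hb (s - 1)).ne'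
    rw [mul_rpow (inv_nonneg.2 hb.le) ((ha.trans_lt hx).le), inv_rpow hb.le, ← mul_assoc,
      mul_inv_cancel_left₀ hb', inv_mul_eq_div, neg_div]
  rw [setIntegral_congr_fun measurableSet_Ioi hscale, integral_const_mul,
    integral_comp_mul_left_Ioi (fun t => t ^ (s - 1) * exp (-t)) a (inv_pos.2 hb), inv_inv,
    smul_eq_mul, ← mul_assoc, ← rpow_add_one hb.ne', sub_add_cancel, inv_mul_eq_div, upperGamma]

theorem four_mul_upperGamma_five_halves {a : ℝ} (ha : 0 ≤ a) :
    4 * upperGamma (5 / 2) a = 3 * upperGamma (1 / 2) a + 2 * √a * exp (-a) * (3 + 2 * a) := by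
  have h₅ := upperGamma_add_one (s := 3 / 2) (by norm_num) ha
  have h₃ := upperGamma_add_one (s := 1 / 2) (by norm_num) ha
  have hpow : a ^ (3 / 2 : ℝ) = a * √a := by
    rw [show (3 / 2 : ℝ) = 1 + 1 / 2 by norm_num, rpow_add' ha (by norm_num), rpow_one,
      sqrt_eq_rpow]
  norm_num at h₅ h₃
  rw [← sqrt_eq_rpow] at h₃
  rw [h₅, h₃, hpow]
  ring

theorem integral_rpow_three_halves_mul_exp_neg_div_two_Ioi {ν : ℝ} (hν : 0 ≤ ν) :
    ∫ x in Ioi ν, x ^ (3 / 2 : ℝ) * exp (-x / 2)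
      = √2 * (3 * upperGamma (1 / 2) (ν / 2) + exp (-ν / 2) * √(2 * ν) * (3 + ν)) := by
  have hpow : (2 : ℝ) ^ (5 / 2 : ℝ) = √2 * 4 := by
    rw [show (5 / 2 : ℝ) = 2 + 1 / 2 by norm_num, rpow_add two_pos, rpow_two, sqrt_eq_rpow]
    ring
  have hsqrt : √(2 * ν) = 2 * √(ν / 2) := by
    rw [show 2 * ν = 2 ^ 2 * (ν / 2) by ring, sqrt_mul (by positivity), sqrt_sq two_pos.le]
  rw [show (3 / 2 : ℝ) = 5 / 2 - 1 by norm_num, integral_rpow_mul_exp_neg_div_Ioi two_pos hν,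
    hpow, mul_assoc, four_mul_upperGamma_five_halves (by positivity), hsqrt, neg_div]
  ring

theorem max_sub_zero_pow_mul_eq_indicator {n : ℕ} (hn : n ≠ 0) (ν : ℝ) (g : ℝ → ℝ) (x : ℝ) :
    max (x - ν) 0 ^ n * g x = (Ioi ν).indicator (fun x => (x - ν) ^ n * g x) x := by
  rcases le_or_gt x ν with hx | hx
  · rw [max_eq_right (sub_nonpos.2 hx), indicator_of_notMem (notMem_Ioi.2 hx), zero_pow hn,
      zero_mul]
  · rw [max_eq_left (sub_nonneg.2 hx.le), indicator_of_mem (mem_Ioi.2 hx)]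

theorem integral_max_sub_zero_sq_mul (μ : Measure ℝ) {ν : ℝ} {g : ℝ → ℝ}
    (h₀ : IntegrableOn g (Ioi ν) μ) (h₁ : IntegrableOn (fun x => x * g x) (Ioi ν) μ)
    (h₂ : IntegrableOn (fun x => x ^ 2 * g x) (Ioi ν) μ) :
    ∫ x, max (x - ν) 0 ^ 2 * g x ∂μ =
      ∫ x in Ioi ν, x ^ 2 * g x ∂μ - 2 * ν * ∫ x, max (x - ν) 0 * g x ∂μ
        - ν ^ 2 * ∫ x in Ioi ν, g x ∂μ := by
  have hfirst : IntegrableOn (fun x => (x - ν) * g x) (Ioi ν) μ := by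
    refine (h₁.sub (h₀.const_mul ν)).congr_fun (fun x _ => ?_) measurableSet_Ioi
    simp only [Pi.sub_apply]
    ring
  have hsq : (fun x => max (x - ν) 0 ^ 2 * g x) = (Ioi ν).indicator (fun x => (x - ν) ^ 2 * g x) :=
    funext (max_sub_zero_pow_mul_eq_indicator two_ne_zero ν g)
  have hlin : (fun x => max (x - ν) 0 * g x) = (Ioi ν).indicator (fun x => (x - ν) * g x) :=
    funext fun x => by simpa using max_sub_zero_pow_mul_eq_indicator one_ne_zero ν g x
  have hsplit : (fun x => (x - ν) ^ 2 * g x)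
      = fun x => x ^ 2 * g x - 2 * ν * ((x - ν) * g x) - ν ^ 2 * g x :=
    funext fun x => by ring
  have hcomb : IntegrableOn (fun x => x ^ 2 * g x - 2 * ν * ((x - ν) * g x)) (Ioi ν) μ :=
    h₂.sub (hfirst.const_mul _)
  rw [hsq, hlin, integral_indicator measurableSet_Ioi, integral_indicator measurableSet_Ioi, hsplit,
    integral_sub hcomb (h₀.const_mul _),
    integral_sub h₂ (hfirst.const_mul _), integral_const_mul, integral_const_mul]

/-- Second moment of the soft-thresholded chi-squared(1) variable:
`E[(X - ν)₊²] = (1/Γ(1/2)) (3 Γ(1/2, ν/2) + e^{-ν/2} √(2ν) (3 + ν)) - 2ν m₁ - ν² ℙ(X > ν)`. -/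
theorem softthreshold_second_moment (ν : ℝ) (hν : 0 ≤ ν)
    (f : ℝ → ℝ)
    (hf : ∀ x, f x = x ^ (-(1 : ℝ)/2) * Real.exp (-x/2) / (Real.sqrt 2 * Real.Gamma (1/2)))
    (m₁ : ℝ) (hm₁ : m₁ = ∫ x in Ioi (0 : ℝ), max (x - ν) 0 * f x) :
    ∫ x in Ioi (0 : ℝ), (max (x - ν) 0) ^ 2 * f x =
      (1 / Real.Gamma (1/2)) *
          (3 * (∫ t in Ioi (ν/2), t ^ (-(1 : ℝ)/2) * Real.exp (-t)) +
            Real.exp (-ν/2) * Real.sqrt (2 * ν) * (3 + ν))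
        - 2 * ν * m₁ - ν ^ 2 * ∫ x in Ioi ν, f x := by
  have hdens : ∀ k : ℕ, ∀ x ∈ Ioi ν,
      x ^ k * f x = x ^ ((k + 1 / 2 : ℝ) - 1) * exp (-x / 2) / (√2 * Gamma (1 / 2)) := by
    intro k x hx
    rw [show (k + 1 / 2 - 1 : ℝ) = k + -(1 : ℝ) / 2 by ring, rpow_add (hν.trans_lt hx),
      rpow_natCast, hf]
    ring
  have hrestrict : (volume.restrict (Ioi 0)).restrict (Ioi ν) = volume.restrict (Ioi ν) :=
    Measure.restrict_restrict_of_subset (Ioi_subset_Ioi hν)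
  have hmoment : ∀ k : ℕ, IntegrableOn (fun x => x ^ k * f x) (Ioi ν) (volume.restrict (Ioi 0)) := by
    intro k
    rw [IntegrableOn, hrestrict]
    refine IntegrableOn.congr_fun ((integrableOn_rpow_mul_exp_neg_div ?_ two_pos hν).div_const _)
      (fun x hx => (hdens k x hx).symm) measurableSet_Ioi
    linarith [k.cast_nonneg (α := ℝ)]
  have hsecond : ∫ x in Ioi ν, x ^ 2 * f x = (1 / Gamma (1 / 2)) *
      (3 * upperGamma (1 / 2) (ν / 2) + exp (-ν / 2) * √(2 * ν) * (3 + ν)) := by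
    rw [setIntegral_congr_fun measurableSet_Ioi (hdens 2), integral_div,
      show ((2 : ℕ) + 1 / 2 - 1 : ℝ) = 3 / 2 by norm_num,
      integral_rpow_three_halves_mul_exp_neg_div_two_Ioi hν]
    field_simp
  have hdecomp := integral_max_sub_zero_sq_mul (volume.restrict (Ioi 0))
    (by simpa using hmoment 0) (by simpa using hmoment 1) (hmoment 2)
  rw [hrestrict] at hdecomp
  rw [hdecomp, ← hm₁, hsecond, upperGamma]
  norm_num
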